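/- With Q_{l,m} as above, for fixed l and m with m < l/2, the induced subgraph of Z^22 on Q_{l,m} is roughly isometric to Z^22 (with rough-isometry constant depending on l and m). -/

import Mathlib

open scoped Classical

/-- The standard lattice graph on `ℤ^d`: two vertices are adjacent iff their
`ℓ¹`-distance is `1`. -/
def latticeGraph (d : ℕ) : SimpleGraph (Fin d → ℤ) where
  Adj x y := ∑ i, (x i - y i).natAbs = 1
  symm := by
    constructor
    intro x y h
    rw [show (∑ i, (y i - x i).natAbs) = ∑ i, (x i - y i).natAbs from
      Finset.sum_congr rfl fun i _ => by rw [← Int.natAbs_neg, neg_sub]]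
    exact h
  loopless := by constructor; intro x h; simp at h

/-- Rough isometry between two graphs, with the shortest-path metrics. -/
def RoughIsom {V W : Type} (G : SimpleGraph V) (H : SimpleGraph W) : Prop :=
  ∃ C : ℝ, 1 ≤ C ∧ ∃ φ : V → W,
    (∀ x y : V,
      (1 / C) * (G.dist x y : ℝ) - C ≤ (H.dist (φ x) (φ y) : ℝ) ∧
      (H.dist (φ x) (φ y) : ℝ) ≤ C * (G.dist x y : ℝ) + C) ∧
    (∀ w : W, ∃ x : V, (H.dist w (φ x) : ℝ) ≤ C)

/-- The heat kernel of the lazy simple random walk on a locally finite graph: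
at each step the walker stays put with probability `1/2` and otherwise moves to a
uniformly chosen neighbour. -/
noncomputable def lazyKernel {V : Type} (G : SimpleGraph V)
    (hfin : ∀ v, Fintype (G.neighborSet v)) : ℕ → V → V → ℝ
  | 0, u, v => if u = v then 1 else 0
  | t + 1, u, v =>
      (1 / 2) * lazyKernel G hfin t u v +
        ∑ z ∈ @SimpleGraph.neighborFinset V G u (hfin u),
          (1 / (2 * (@SimpleGraph.degree V G u (hfin u) : ℝ))) * lazyKernel G hfin t z v

/-- `Q_{l,m}`: the union over all 19-element index sets `I ⊆ {1,…,22}` of the sets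
`⋂_{i∈I} {n ∈ ℤ²² : |n_i mod l| ≤ m}`, using the balanced residue `Int.bmod`. -/
def Qset (l m : ℕ) : Set (Fin 22 → ℤ) :=
  {n | ∃ I : Finset (Fin 22), I.card = 19 ∧ ∀ i ∈ I, |Int.bmod (n i) l| ≤ (m : ℤ)}

/-! ### Auxiliary material -/

abbrev V22 := Fin 22 → ℤ

/-- The `ℓ¹` distance on `ℤ²²`, valued in `ℕ`. -/
def d1 (x y : V22) : ℕ := ∑ i, (x i - y i).natAbs

lemma d1_comm (x y : V22) : d1 x y = d1 y x :=
  Finset.sum_congr rfl fun i _ => by rw [← Int.natAbs_neg, neg_sub]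

lemma d1_triangle (x y z : V22) : d1 x z ≤ d1 x y + d1 y z := by
  unfold d1
  rw [← Finset.sum_add_distrib]
  refine Finset.sum_le_sum fun i _ => ?_
  have h : x i - z i = (x i - y i) + (y i - z i) := by ring
  rw [h]; exact Int.natAbs_add_le _ _

lemma adj_update (x : V22) (i : Fin 22) (c : ℤ) (h : (x i - c).natAbs = 1) :
    (latticeGraph 22).Adj x (Function.update x i c) := by
  show ∑ j, (x j - Function.update x i c j).natAbs = 1
  rw [Finset.sum_eq_single_of_mem i (Finset.mem_univ i)]
  · simpa using h
  · intro j _ hj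
    simp [Function.update_of_ne hj]

/-- A walk moving coordinate `i` from `x i` to `c`, one unit at a time. -/
def walkSeg (i : Fin 22) : (k : ℕ) → (x : V22) → (c : ℤ) → (c - x i).natAbs = k →
    (latticeGraph 22).Walk x (Function.update x i c)
  | 0, x, c, h =>
    SimpleGraph.Walk.nil.copy rfl (by
      have hc : c = x i := by omega
      rw [hc, Function.update_eq_self])
  | k+1, x, c, h =>
    SimpleGraph.Walk.cons
      (adj_update x i (if x i < c then x i + 1 else x i - 1) (by split <;> omega))
      ((walkSeg i k (Function.update x i (if x i < c then x i + 1 else x i - 1)) c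
          (by rw [Function.update_self]; split <;> omega)).copy rfl
        (by rw [Function.update_idem]))

lemma walkSeg_length (i : Fin 22) (k : ℕ) (x : V22) (c : ℤ) (h : (c - x i).natAbs = k) :
    (walkSeg i k x c h).length = k := by
  induction k generalizing x with
  | zero => simp [walkSeg]
  | succ k ih => simp [walkSeg, ih]

lemma walkSeg_support (i : Fin 22) (k : ℕ) (x : V22) (c : ℤ) (h : (c - x i).natAbs = k) :
    ∀ v ∈ (walkSeg i k x c h).support, ∃ t : ℤ,
      v = Function.update x i t ∧ (x i ≤ t ∧ t ≤ c ∨ c ≤ t ∧ t ≤ x i) := by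
  induction k generalizing x with
  | zero =>
    intro v hv
    simp only [walkSeg, SimpleGraph.Walk.support_copy, SimpleGraph.Walk.support_nil,
      List.mem_singleton] at hv
    exact ⟨x i, by rw [hv, Function.update_eq_self], by omega⟩
  | succ k ih =>
    intro v hv
    simp only [walkSeg, SimpleGraph.Walk.support_cons, SimpleGraph.Walk.support_copy,
      List.mem_cons] at hv
    rcases hv with rfl | hv
    · exact ⟨v i, by rw [Function.update_eq_self], by omega⟩
    · obtain ⟨t, ht, hb⟩ := ih _ _ v hv
      rw [Function.update_idem] at ht
      refine ⟨t, ht, ?_⟩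
      rw [Function.update_self] at hb
      split at hb <;> omega

/-- Partial interpolation between `x` and `y` along the index list `L`. -/
def mix (x y : V22) (L : List (Fin 22)) : V22 := fun j => if j ∈ L then y j else x j

lemma update_mix (x y : V22) (i : Fin 22) (L : List (Fin 22)) :
    Function.update (mix x y L) i (y i) = mix x y (i :: L) := by
  funext j
  by_cases hj : j = i
  · subst hj; simp [mix]
  · simp [Function.update_of_ne hj, mix, hj]

/-- A walk from `x` to `mix x y L`, moving one coordinate (from `L`) at a time. -/
def walkList (x y : V22) : (L : List (Fin 22)) → (latticeGraph 22).Walk x (mix x y L)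
  | [] => SimpleGraph.Walk.nil.copy rfl (funext fun j => by simp [mix])
  | i :: L =>
    (walkList x y L).append
      ((walkSeg i (y i - mix x y L i).natAbs (mix x y L) (y i) rfl).copy rfl
        (update_mix x y i L))

lemma walkList_length (x y : V22) (L : List (Fin 22)) (hL : L.Nodup) :
    (walkList x y L).length = ∑ i ∈ L.toFinset, (y i - x i).natAbs := by
  induction L with
  | nil => simp [walkList]
  | cons i L ih =>
    rw [List.nodup_cons] at hL
    have hmix : mix x y L i = x i := by simp [mix, hL.1]
    simp only [walkList, SimpleGraph.Walk.length_append, SimpleGraph.Walk.length_copy,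
      walkSeg_length, ih hL.2, hmix, List.toFinset_cons]
    rw [Finset.sum_insert (by simpa using hL.1)]
    ring

lemma walkList_support (x y : V22) (L : List (Fin 22)) :
    ∀ v ∈ (walkList x y L).support, ∃ i : Fin 22,
      (∀ j, j ≠ i → v j = x j ∨ v j = y j) ∧
      (x i ≤ v i ∧ v i ≤ y i ∨ y i ≤ v i ∧ v i ≤ x i) := by
  induction L with
  | nil =>
    intro v hv
    simp only [walkList, SimpleGraph.Walk.support_copy, SimpleGraph.Walk.support_nil,
      List.mem_singleton] at hv
    subst hv
    exact ⟨0, fun j _ => Or.inl rfl, by omega⟩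
  | cons i L ih =>
    intro v hv
    simp only [walkList] at hv
    rw [SimpleGraph.Walk.mem_support_append_iff] at hv
    rcases hv with hv | hv
    · exact ih v hv
    · rw [SimpleGraph.Walk.support_copy] at hv
      obtain ⟨t, rfl, hb⟩ := walkSeg_support _ _ _ _ _ v hv
      refine ⟨i, fun j hj => ?_, ?_⟩
      · rw [Function.update_of_ne hj]
        by_cases hjL : j ∈ L
        · exact Or.inr (by simp [mix, hjL])
        · exact Or.inl (by simp [mix, hjL])
      · rw [Function.update_self]
        by_cases hiL : i ∈ L
        · simp only [mix, if_pos hiL] at hb; omega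
        · simp only [mix, if_neg hiL] at hb; omega

/-- A walk between any two points of the lattice, of length `d1 x y`. -/
def fullW (x y : V22) : (latticeGraph 22).Walk x y :=
  (walkList x y (List.finRange 22)).copy rfl (funext fun j => by simp [mix, List.mem_finRange])

lemma fullW_length (x y : V22) : (fullW x y).length = d1 x y := by
  rw [fullW, SimpleGraph.Walk.length_copy, walkList_length _ _ _ (List.nodup_finRange 22),
    List.toFinset_finRange]
  exact Finset.sum_congr rfl fun i _ => by rw [← Int.natAbs_neg, neg_sub]

lemma fullW_support (x y : V22) :
    ∀ v ∈ (fullW x y).support, ∃ i : Fin 22,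
      (∀ j, j ≠ i → v j = x j ∨ v j = y j) ∧
      (x i ≤ v i ∧ v i ≤ y i ∨ y i ≤ v i ∧ v i ≤ x i) := by
  intro v hv
  rw [fullW, SimpleGraph.Walk.support_copy] at hv
  exact walkList_support x y _ v hv

lemma d1_le_walk_length {x y : V22} (w : (latticeGraph 22).Walk x y) :
    d1 x y ≤ w.length := by
  induction w with
  | nil => simp [d1]
  | @cons a c b h p ih =>
    have h1 : d1 a c = 1 := h
    calc d1 a b ≤ d1 a c + d1 c b := d1_triangle a c b
      _ ≤ 1 + p.length := by omega
      _ = (SimpleGraph.Walk.cons h p).length := by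
          rw [SimpleGraph.Walk.length_cons]; omega

lemma Hdist_eq (x y : V22) : (latticeGraph 22).dist x y = d1 x y := by
  have hr : (latticeGraph 22).Reachable x y := ⟨fullW x y⟩
  refine le_antisymm ?_ ?_
  · have := SimpleGraph.dist_le (fullW x y)
    rwa [fullW_length] at this
  · obtain ⟨w, hw⟩ := hr.exists_walk_length_eq_dist
    rw [← hw]
    exact d1_le_walk_length w

/-- Transfer a walk staying inside `Q` to a walk in the induced subgraph. -/
lemma transfer {Q : Set V22} : ∀ {a b : V22} (w : (latticeGraph 22).Walk a b),
    (∀ v ∈ w.support, v ∈ Q) → ∀ (ha : a ∈ Q) (hb : b ∈ Q),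
    ∃ w' : ((latticeGraph 22).induce Q).Walk ⟨a, ha⟩ ⟨b, hb⟩, w'.length = w.length := by
  intro a b w
  induction w with
  | nil => exact fun _ _ _ => ⟨SimpleGraph.Walk.nil, rfl⟩
  | @cons a c b h p ih =>
    intro hw ha hb
    have hc : c ∈ Q := hw c (by simp)
    obtain ⟨w', hl⟩ := ih (fun v hv => hw v (by simp [SimpleGraph.Walk.support_cons, hv])) hc hb
    have hadj : ((latticeGraph 22).induce Q).Adj ⟨a, ha⟩ ⟨c, hc⟩ := h
    exact ⟨SimpleGraph.Walk.cons hadj w', by simp [hl]⟩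

/-! ### bmod lemmas -/

lemma bmod_small {l m : ℕ} (h : 2 * m < l) {s : ℤ} (hs : |s| ≤ (m : ℤ)) :
    Int.bmod s l = s := by
  have hml : (2 * m : ℤ) < l := by exact_mod_cast h
  have habs := abs_le.mp hs
  rw [Int.bmod_def]
  rcases le_or_gt 0 s with hpos | hneg
  · rw [Int.emod_eq_of_lt hpos (by omega)]
    rw [if_pos (by omega)]
  · have h1 : s % (l : ℤ) = s + l := by
      have h2 : (s + (l:ℤ) * 1) % l = s % l := Int.add_mul_emod_self_left s (l:ℤ) 1
      rw [mul_one] at h2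
      have h3 : s % (l : ℤ) = (s + l) % l := h2.symm
      rw [h3, Int.emod_eq_of_lt (by omega) (by omega)]
    rw [h1, if_neg (by omega)]
    omega

lemma bmod_rnd' {l : ℕ} (a : ℤ) : Int.bmod (a - Int.bmod a l) l = 0 := by
  rw [Int.sub_bmod_bmod, sub_self, Int.zero_bmod]

lemma natAbs_bmod_le {l : ℕ} (hl : 0 < l) (a : ℤ) : (Int.bmod a l).natAbs ≤ l := by
  have h1 : -((l : ℤ) / 2) ≤ Int.bmod a l := Int.le_bmod hl
  have h2 : Int.bmod a l < ((l : ℤ) + 1) / 2 := by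
    have := Int.bmod_lt (x := a) hl
    exact_mod_cast this
  omega

lemma bmod_transit {l m : ℕ} (h : 2 * m < l) {a t : ℤ}
    (ha : |Int.bmod a l| ≤ (m : ℤ))
    (ht : a ≤ t ∧ t ≤ a - Int.bmod a l ∨ a - Int.bmod a l ≤ t ∧ t ≤ a) :
    |Int.bmod t l| ≤ (m : ℤ) := by
  set r := Int.bmod a l with hr
  have hsm : |t - (a - r)| ≤ (m : ℤ) := by
    rw [abs_le] at ha ⊢
    omega
  have key : Int.bmod t l = t - (a - r) := by
    calc Int.bmod t l
        = Int.bmod ((t - (a - r)) + a - Int.bmod a l) l := by rw [hr]; ring_nf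
      _ = Int.bmod ((t - (a - r)) + a - a) l := Int.sub_bmod_bmod
      _ = Int.bmod (t - (a - r)) l := by ring_nf
      _ = t - (a - r) := bmod_small h hsm
  rw [key]
  exact hsm

/-! ### Rounding to the grid `lℤ²²` -/

/-- Round each coordinate to the nearest multiple of `l`. -/
def rnd (l : ℕ) (x : V22) : V22 := fun i => x i - Int.bmod (x i) l

lemma rnd_bmod (l : ℕ) (x : V22) (i : Fin 22) : Int.bmod (rnd l x i) l = 0 :=
  bmod_rnd' (x i)

lemma d1_rnd_le {l : ℕ} (hl : 0 < l) (x : V22) : d1 x (rnd l x) ≤ 22 * l := by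
  unfold d1 rnd
  calc (∑ i, (x i - (x i - Int.bmod (x i) l)).natAbs)
      = ∑ i : Fin 22, (Int.bmod (x i) l).natAbs := by
        refine Finset.sum_congr rfl fun i _ => ?_
        congr 1; ring
    _ ≤ ∑ _i : Fin 22, l := Finset.sum_le_sum fun i _ => natAbs_bmod_le hl (x i)
    _ = 22 * l := by simp [Finset.sum_const, mul_comm]

lemma rnd_mem {l m : ℕ} (h : 2 * m < l) (x : V22) : rnd l x ∈ Qset l m := by
  obtain ⟨I, _, hIcard⟩ := Finset.exists_subset_card_eq
    (show 19 ≤ (Finset.univ : Finset (Fin 22)).card by simp)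
  exact ⟨I, hIcard, fun i _ => by rw [rnd_bmod]; simp⟩

lemma mem_Q_walk_rnd {l m : ℕ} (h : 2 * m < l) {x : V22} (hx : x ∈ Qset l m) :
    ∀ v ∈ (fullW x (rnd l x)).support, v ∈ Qset l m := by
  intro v hv
  obtain ⟨i, hj, hb⟩ := fullW_support _ _ v hv
  obtain ⟨I, hI19, hIg⟩ := hx
  refine ⟨I, hI19, fun j hjI => ?_⟩
  by_cases hji : j = i
  · subst hji
    exact bmod_transit h (hIg j hjI) (by exact hb)
  · rcases hj j hji with h1 | h1
    · rw [h1]; exact hIg j hjI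
    · rw [h1, rnd_bmod]; simp

lemma mem_Q_walk_grid {l m : ℕ} (h : 2 * m < l) {x y : V22}
    (hx0 : ∀ i, Int.bmod (x i) l = 0) (hy0 : ∀ i, Int.bmod (y i) l = 0) :
    ∀ v ∈ (fullW x y).support, v ∈ Qset l m := by
  intro v hv
  obtain ⟨i, hj, _⟩ := fullW_support _ _ v hv
  obtain ⟨I, hIsub, hIcard⟩ := Finset.exists_subset_card_eq
    (show 19 ≤ (Finset.univ.erase i : Finset (Fin 22)).card by
      rw [Finset.card_erase_of_mem (Finset.mem_univ i)]; simp)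
  refine ⟨I, hIcard, fun j hjI => ?_⟩
  have hne : j ≠ i := Finset.ne_of_mem_erase (hIsub hjI)
  rcases hj j hne with h1 | h1 <;> rw [h1]
  · rw [hx0 j]; simp
  · rw [hy0 j]; simp

/-- Key lemma: between any two points of `Q` there is a walk in the induced graph of
length at most `d1 x y + 88 l`. -/
lemma Qwalk {l m : ℕ} (h : 2 * m < l) {x y : V22} (hx : x ∈ Qset l m) (hy : y ∈ Qset l m) :
    ∃ w : ((latticeGraph 22).induce (Qset l m)).Walk ⟨x, hx⟩ ⟨y, hy⟩,
      w.length ≤ d1 x y + 88 * l := by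
  have hl : 0 < l := by omega
  set x' := rnd l x with hx'
  set y' := rnd l y with hy'
  set W : (latticeGraph 22).Walk x y :=
    (fullW x x').append ((fullW x' y').append (fullW y y').reverse) with hW
  have hWsup : ∀ v ∈ W.support, v ∈ Qset l m := by
    intro v hv
    rw [hW, SimpleGraph.Walk.mem_support_append_iff,
      SimpleGraph.Walk.mem_support_append_iff, SimpleGraph.Walk.support_reverse,
      List.mem_reverse] at hv
    rcases hv with hv | hv | hv
    · exact mem_Q_walk_rnd h hx v hv
    · exact mem_Q_walk_grid h (rnd_bmod l x) (rnd_bmod l y) v hv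
    · exact mem_Q_walk_rnd h hy v hv
  obtain ⟨w', hw'⟩ := transfer W hWsup hx hy
  refine ⟨w', ?_⟩
  rw [hw', hW]
  simp only [SimpleGraph.Walk.length_append, SimpleGraph.Walk.length_reverse, fullW_length]
  have b1 : d1 x x' ≤ 22 * l := d1_rnd_le hl x
  have b3 : d1 y y' ≤ 22 * l := d1_rnd_le hl y
  have b2 : d1 x' y' ≤ d1 x x' + d1 x y + d1 y y' := by
    calc d1 x' y' ≤ d1 x' x + d1 x y' := d1_triangle _ _ _
      _ ≤ d1 x' x + (d1 x y + d1 y y') := by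
          have := d1_triangle x y y'
          omega
      _ = d1 x x' + d1 x y + d1 y y' := by rw [d1_comm x' x]; omega
  omega

/-- The induced subgraph of `ℤ²²` on `Q_{l,m}` is roughly isometric to `ℤ²²`
(for `m < l/2`, with constants depending on `l` and `m`). -/
theorem stmt13 (l m : ℕ) (h : 2 * m < l) :
    RoughIsom ((latticeGraph 22).induce (Qset l m)) (latticeGraph 22) := by
  have hl : 0 < l := by omega
  set C : ℝ := 200 * l + 200 with hC
  have hl0 : (0 : ℝ) ≤ (l : ℝ) := by positivity
  have hC1 : (1 : ℝ) ≤ C := by rw [hC]; linarith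
  have hCpos : (0 : ℝ) < C := lt_of_lt_of_le one_pos hC1
  refine ⟨C, hC1, Subtype.val, fun x y => ?_, fun w => ?_⟩
  · obtain ⟨w0, hw0⟩ := Qwalk h x.prop y.prop
    have hGd : ((latticeGraph 22).induce (Qset l m)).dist x y ≤ d1 x.val y.val + 88 * l :=
      le_trans (SimpleGraph.dist_le w0) hw0
    have hr : ((latticeGraph 22).induce (Qset l m)).Reachable x y := ⟨w0⟩
    have hHd : (latticeGraph 22).dist x.val y.val = d1 x.val y.val := Hdist_eq _ _
    have hHG : (latticeGraph 22).dist x.val y.val ≤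
        ((latticeGraph 22).induce (Qset l m)).dist x y := by
      obtain ⟨w1, hw1⟩ := hr.exists_walk_length_eq_dist
      have h2 := SimpleGraph.dist_le (w1.map (SimpleGraph.Embedding.induce (Qset l m)).toHom)
      rwa [SimpleGraph.Walk.length_map, hw1] at h2
    set A : ℕ := ((latticeGraph 22).induce (Qset l m)).dist x y
    set B : ℕ := (latticeGraph 22).dist x.val y.val
    have hAB : (A : ℝ) ≤ (B : ℝ) + 88 * l := by
      have : A ≤ B + 88 * l := by omega
      exact_mod_cast this
    have hBA : (B : ℝ) ≤ (A : ℝ) := by exact_mod_cast hHG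
    have hA0 : (0 : ℝ) ≤ (A : ℝ) := Nat.cast_nonneg A
    have hC88 : 88 * (l:ℝ) ≤ C := by rw [hC]; linarith
    constructor
    · have hdivle : (1 / C) * (A : ℝ) ≤ (A : ℝ) := by
        apply mul_le_of_le_one_left hA0
        rw [div_le_one hCpos]; linarith
      linarith
    · calc (B : ℝ) ≤ (A : ℝ) := hBA
        _ ≤ C * (A : ℝ) := le_mul_of_one_le_left hA0 hC1
        _ ≤ C * (A : ℝ) + C := by linarith
  · refine ⟨⟨rnd l w, rnd_mem h w⟩, ?_⟩
    have heq : (latticeGraph 22).dist w (rnd l w) = d1 w (rnd l w) := Hdist_eq _ _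
    have hle : d1 w (rnd l w) ≤ 22 * l := d1_rnd_le hl w
    have hle2 : ((latticeGraph 22).dist w (rnd l w) : ℝ) ≤ 22 * l := by
      rw [heq]; exact_mod_cast hle
    rw [hC]
    exact le_trans hle2 (by linarith)
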